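/- arXiv:2403.19086 — 2 statements merged into one kernel-verified Lean document; each statement's English description precedes it below -/
import Mathlib

section
/- Let \eta : \mathbb{R} \to \mathbb{R} be C^1 with \eta' > 0, and let r > 0. Then for every \phi \in C_c^\infty((-r,r)), \int_{-r}^r \phi(t)^2 \eta'(t) dt \le 4 \left( \sup_{|t| \le r} \frac{\eta(t)^2}{\eta'(t)^2} \right) \int_{-r}^r \phi'(t)^2 \eta'(t) dt, provided \eta(t) > 0 on [-r,r]. -/
open Set intervalIntegral

/-- the basic eigenvalue lower bound on the warped cylinder,
in its one-dimensional form. -/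
theorem stmt10 (η η' : ℝ → ℝ) (hd : ∀ t, HasDerivAt η (η' t) t)
    (hc : Continuous η') (hη' : ∀ t, 0 < η' t) (r : ℝ) (hr : 0 < r)
    (hηpos : ∀ t ∈ Set.Icc (-r) r, 0 < η t)
    (φ : ℝ → ℝ) (hφ : ContDiff ℝ (⊤ : ℕ∞) φ) (hsupp : HasCompactSupport φ)
    (hsuppΩ : tsupport φ ⊆ Set.Ioo (-r) r) :
    ∫ t in (-r)..r, (φ t) ^ 2 * η' t
      ≤ 4 * (⨆ t : Set.Icc (-r) r, (η t) ^ 2 / (η' t) ^ 2)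
          * ∫ t in (-r)..r, (deriv φ t) ^ 2 * η' t := by
  set M : ℝ := ⨆ t : Set.Icc (-r) r, (η t) ^ 2 / (η' t) ^ 2 with hM
  have hφc : Continuous φ := hφ.continuous
  have hφ'c : Continuous (deriv φ) := hφ.continuous_deriv (by simp)
  have hηc : Continuous η := continuous_iff_continuousAt.mpr fun t => (hd t).continuousAt
  have hlr : (-r) ≤ r := by linarith
  -- boundedness of the sup
  have hgc : Continuous (fun t => (η t) ^ 2 / (η' t) ^ 2) :=
    (hηc.pow 2).div (hc.pow 2) (fun t => pow_ne_zero 2 (hη' t).ne')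
  have hbdd : BddAbove (Set.range fun s : Set.Icc (-r) r => (η s) ^ 2 / (η' s) ^ 2) := by
    have h := ((isCompact_Icc (a := -r) (b := r)).image hgc).bddAbove
    rwa [Set.image_eq_range] at h
  have hMle : ∀ t ∈ Set.Icc (-r) r, (η t) ^ 2 / (η' t) ^ 2 ≤ M := by
    intro t ht
    exact le_ciSup hbdd ⟨t, ht⟩
  have hM0 : 0 ≤ M := le_trans (by positivity) (hMle 0 (by constructor <;> linarith))
  -- values at the endpoints vanish
  have hφr : φ r = 0 := by
    apply image_eq_zero_of_notMem_tsupport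
    intro h; exact absurd (hsuppΩ h).2 (lt_irrefl r)
  have hφmr : φ (-r) = 0 := by
    apply image_eq_zero_of_notMem_tsupport
    intro h; exact absurd (hsuppΩ h).1 (lt_irrefl (-r))
  -- integration by parts
  have hF : ∀ t ∈ Set.uIcc (-r) r, HasDerivAt (fun t => φ t ^ 2 * η t)
      (2 * φ t * deriv φ t * η t + φ t ^ 2 * η' t) t := by
    intro t _
    have h1 : HasDerivAt φ (deriv φ t) t :=
      ((hφ.differentiable (by simp)) t).hasDerivAt
    have : HasDerivAt (fun t => φ t ^ 2 * η t) _ t := (h1.fun_pow 2).fun_mul (hd t)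
    convert this using 1
    ring
  have hint1 : IntervalIntegrable (fun t => 2 * φ t * deriv φ t * η t) MeasureTheory.volume (-r) r :=
    (((continuous_const.mul hφc).mul hφ'c).mul hηc).intervalIntegrable _ _
  have hint2 : IntervalIntegrable (fun t => φ t ^ 2 * η' t) MeasureTheory.volume (-r) r :=
    ((hφc.pow 2).mul hc).intervalIntegrable _ _
  have hint3 : IntervalIntegrable (fun t => deriv φ t ^ 2 * η' t) MeasureTheory.volume (-r) r :=
    ((hφ'c.pow 2).mul hc).intervalIntegrable _ _
  have hparts : ∫ t in (-r)..r, (2 * φ t * deriv φ t * η t + φ t ^ 2 * η' t) = 0 := by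
    rw [intervalIntegral.integral_eq_sub_of_hasDerivAt hF (hint1.add hint2)]
    simp [hφr, hφmr]
  have hsplit : (∫ t in (-r)..r, 2 * φ t * deriv φ t * η t)
      + ∫ t in (-r)..r, φ t ^ 2 * η' t = 0 := by
    rw [← intervalIntegral.integral_add hint1 hint2]; exact hparts
  have heq : (∫ t in (-r)..r, φ t ^ 2 * η' t)
      = ∫ t in (-r)..r, -(2 * φ t * deriv φ t * η t) := by
    rw [intervalIntegral.integral_neg]; linarith
  -- pointwise bound
  have hpt : ∀ t ∈ Set.Icc (-r) r,
      -(2 * φ t * deriv φ t * η t)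
        ≤ 1/2 * (φ t ^ 2 * η' t) + 2 * M * (deriv φ t ^ 2 * η' t) := by
    intro t ht
    have he' : 0 < η' t := hη' t
    have h1 : (η t) ^ 2 ≤ M * (η' t) ^ 2 := by
      have := hMle t ht
      rwa [div_le_iff₀ (by positivity)] at this
    have h2 : -(2 * φ t * deriv φ t * η t) * η' t
        ≤ (1/2 * (φ t ^ 2 * η' t) + 2 * M * (deriv φ t ^ 2 * η' t)) * η' t := by
      nlinarith [sq_nonneg (φ t * η' t + 2 * deriv φ t * η t),
        mul_le_mul_of_nonneg_left h1 (sq_nonneg (deriv φ t))]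
    exact le_of_mul_le_mul_right h2 he'
  have hmono : (∫ t in (-r)..r, -(2 * φ t * deriv φ t * η t))
      ≤ ∫ t in (-r)..r, (1/2 * (φ t ^ 2 * η' t) + 2 * M * (deriv φ t ^ 2 * η' t)) := by
    apply intervalIntegral.integral_mono_on hlr hint1.neg
    · exact ((hint2.const_mul _).add (hint3.const_mul _))
    · exact hpt
  have hrhs : (∫ t in (-r)..r, (1/2 * (φ t ^ 2 * η' t) + 2 * M * (deriv φ t ^ 2 * η' t)))
      = 1/2 * (∫ t in (-r)..r, φ t ^ 2 * η' t)
        + 2 * M * ∫ t in (-r)..r, deriv φ t ^ 2 * η' t := by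
    rw [intervalIntegral.integral_add (hint2.const_mul _) (hint3.const_mul _),
      intervalIntegral.integral_const_mul, intervalIntegral.integral_const_mul]
  rw [heq] at *
  linarith [hmono, hrhs.le, hrhs.ge]
end

section
/- Let \sigma be a locally finite Borel measure on (0,\infty), \mu > 0, r_0 > 0, and let F, G : [0,1] \to [0,\infty) be continuous. Suppose that for every r \ge r_0, \int_0^r F(t/r)\, d\sigma(t) \le \int_0^r G(t/r)\, d\sigma(t). Then for every \bar r \ge r_0, \int_0^{\bar r} \left( \int_{t/\bar r}^{\min\{1, t/r_0\}} (G(s) - F(s)) s^{\mu-1} ds \right) \frac{d\sigma(t)}{t^\mu} \ge 0. -/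
open Set MeasureTheory intervalIntegral
open scoped Interval

/-!
Put `K(t, r) = 1_{t ≤ r} H(t / r) r^{-(μ+1)}` with `H = G - F`. For fixed `r ∈ (r₀, r̄]`,
integrating `K` against `σ` over `(0, r̄]` gives `r^{-(μ+1)} ∫_{(0, r]} (G - F)(t / r) dσ`,
which is nonnegative by hypothesis; for fixed `t ∈ (0, r̄]`, integrating `K` in `r` over
`(r₀, r̄]` and substituting `s = t / r` gives the inner integral of the claim. Fubini's theorem
on `(0, r̄] × (r₀, r̄]` exchanges the two.
-/

theorem integral_comp_div_mul_rpow {H : ℝ → ℝ} {μ t a b : ℝ} (ht : 0 < t) (ha : 0 < a)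
    (hab : a ≤ b) (hH : ContinuousOn H (Icc (t / b) (t / a))) :
    ∫ r in a..b, H (t / r) * r ^ (-(μ + 1)) =
      (∫ s in t / b..t / a, H s * s ^ (μ - 1)) / t ^ μ := by
  have hpos : ∀ r ∈ [[a, b]], 0 < r := fun r hr =>
    ha.trans_le (by rw [uIcc_of_le hab] at hr; exact hr.1)
  have hderiv : ∀ r ∈ [[a, b]], HasDerivAt (fun r => t / r) (t * -(r ^ 2)⁻¹) r := fun r hr => by
    simpa only [div_eq_mul_inv] using (hasDerivAt_inv (hpos r hr).ne').const_mul t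
  have hderiv_cont : ContinuousOn (fun r => t * -(r ^ 2)⁻¹) [[a, b]] :=
    continuousOn_const.mul <|
      (continuousOn_id.pow 2 |>.inv₀ fun r hr => pow_ne_zero 2 (hpos r hr).ne').neg
  have himage : (fun r => t / r) '' [[a, b]] ⊆ Icc (t / b) (t / a) := by
    rintro - ⟨r, hr, rfl⟩
    rw [uIcc_of_le hab] at hr
    exact ⟨div_le_div_of_nonneg_left ht.le (ha.trans_le hr.1) hr.2,
      div_le_div_of_nonneg_left ht.le ha hr.1⟩
  have hweight : ContinuousOn (fun s => H s * s ^ (μ - 1)) (Icc (t / b) (t / a)) :=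
    hH.mul <| continuousOn_id.rpow_const fun s hs =>
      Or.inl (div_pos ht (ha.trans_le hab) |>.trans_le hs.1).ne'
  have hsubst := integral_comp_mul_deriv' hderiv hderiv_cont (hweight.mono himage)
  have hjacobian : ∀ r ∈ [[a, b]],
      ((fun s => H s * s ^ (μ - 1)) ∘ fun r => t / r) r * (t * -(r ^ 2)⁻¹) =
        -t ^ μ * (H (t / r) * r ^ (-(μ + 1))) := fun r hr => by
    have hr := hpos r hr
    simp only [Function.comp, Real.div_rpow ht.le hr.le, Real.rpow_sub_one ht.ne',
      Real.rpow_sub_one hr.ne', Real.rpow_neg hr.le, Real.rpow_add_one hr.ne']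
    have hrμ := Real.rpow_pos_of_pos hr μ
    field_simp
  rw [integral_congr hjacobian, intervalIntegral.integral_const_mul,
    integral_symm (t / b)] at hsubst
  rw [eq_div_iff (Real.rpow_pos_of_pos ht μ).ne']
  linarith

noncomputable def averagingKernel (μ : ℝ) (H : ℝ → ℝ) : ℝ × ℝ → ℝ :=
  {p | p.1 ≤ p.2}.indicator fun p => H (p.1 / p.2) * p.2 ^ (-(μ + 1))

theorem setIntegral_Ioc_averagingKernel_fst (σ : Measure ℝ) (μ : ℝ) (H : ℝ → ℝ) {r b : ℝ}
    (hrb : r ≤ b) :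
    ∫ t in Ioc 0 b, averagingKernel μ H (t, r) ∂σ =
      (∫ t in Ioc 0 r, H (t / r) ∂σ) * r ^ (-(μ + 1)) := by
  have hsection : (fun t => averagingKernel μ H (t, r)) =
      (Iic r).indicator fun t => H (t / r) * r ^ (-(μ + 1)) := by
    ext t
    simp only [averagingKernel, indicator_apply, mem_ofPred_eq, mem_Iic]
  rw [hsection, MeasureTheory.integral_indicator measurableSet_Iic,
    Measure.restrict_restrict measurableSet_Iic, inter_comm, Ioc_inter_Iic, min_eq_right hrb,
    MeasureTheory.integral_mul_const]

theorem setIntegral_Ioc_averagingKernel_snd {μ r₀ b t : ℝ} {H : ℝ → ℝ}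
    (hH : ContinuousOn H (Icc 0 1)) (hr₀ : 0 < r₀) (hr₀b : r₀ ≤ b) (ht : t ∈ Ioc 0 b) :
    ∫ r in Ioc r₀ b, averagingKernel μ H (t, r) =
      (∫ s in t / b..min 1 (t / r₀), H s * s ^ (μ - 1)) / t ^ μ := by
  have hsection : (fun r => averagingKernel μ H (t, r)) =
      (Ici t).indicator fun r => H (t / r) * r ^ (-(μ + 1)) := by
    ext r
    simp only [averagingKernel, indicator_apply, mem_ofPred_eq, mem_Ici]
  have hmax : t / max r₀ t = min 1 (t / r₀) := by
    rcases le_total t r₀ with h | h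
    · rw [max_eq_left h, min_eq_right ((div_le_one hr₀).2 h)]
    · rw [max_eq_right h, div_self ht.1.ne', min_eq_left ((one_le_div hr₀).2 h)]
  have hmax_pos : 0 < max r₀ t := hr₀.trans_le (le_max_left _ _)
  rw [hsection, MeasureTheory.integral_indicator measurableSet_Ici,
    Measure.restrict_restrict measurableSet_Ici,
    setIntegral_congr_set ((Ioi_ae_eq_Ici (a := t)).symm.inter (ae_eq_refl (Ioc r₀ b))),
    inter_comm, Ioc_inter_Ioi, ← integral_of_le (max_le hr₀b ht.2),
    integral_comp_div_mul_rpow ht.1 hmax_pos (max_le hr₀b ht.2), hmax]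
  refine hH.mono (Icc_subset_Icc (div_nonneg ht.1.le (hr₀.trans_le hr₀b).le) ?_)
  rw [hmax]
  exact min_le_left _ _

theorem integrable_averagingKernel (σ : Measure ℝ) [IsLocallyFiniteMeasure σ] {μ r₀ b : ℝ}
    {H : ℝ → ℝ} (hH : ContinuousOn H (Icc 0 1)) (hr₀ : 0 < r₀) :
    Integrable (averagingKernel μ H)
      ((σ.restrict (Ioc 0 b)).prod (volume.restrict (Ioc r₀ b))) := by
  have hle : MeasurableSet {p : ℝ × ℝ | p.1 ≤ p.2} :=
    measurableSet_le measurable_fst measurable_snd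
  set K := {p : ℝ × ℝ | p.1 ≤ p.2} ∩ Icc 0 b ×ˢ Icc r₀ b
  have hpos : ∀ p ∈ K, 0 < p.2 := fun p hp => hr₀.trans_le hp.2.2.1
  have hcont : ContinuousOn (fun p : ℝ × ℝ => H (p.1 / p.2) * p.2 ^ (-(μ + 1))) K :=
    (hH.comp (continuousOn_fst.div continuousOn_snd fun p hp => (hpos p hp).ne') fun p hp =>
      ⟨div_nonneg hp.2.1.1 (hpos p hp).le, div_le_one_of_le₀ hp.1 (hpos p hp).le⟩).mul
      (continuousOn_snd.rpow_const fun p hp => Or.inl (hpos p hp).ne')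
  have hfinite : (σ.prod volume) ({p : ℝ × ℝ | p.1 ≤ p.2} ∩ Ioc 0 b ×ˢ Ioc r₀ b) ≠ ⊤ :=
    (measure_mono inter_subset_right |>.trans_lt <| by
      rw [Measure.prod_prod]; exact ENNReal.mul_lt_top measure_Ioc_lt_top measure_Ioc_lt_top).ne
  rw [Measure.prod_restrict, averagingKernel, integrable_indicator_iff hle, IntegrableOn,
    Measure.restrict_restrict hle]
  exact hcont.integrableOn_of_subset_isCompact
    ((isCompact_Icc.prod isCompact_Icc).inter_left (isClosed_le continuous_fst continuous_snd))
    (hle.inter (measurableSet_Ioc.prod measurableSet_Ioc))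
    (inter_subset_inter_right _ (prod_mono Ioc_subset_Icc_self Ioc_subset_Icc_self)) hfinite

theorem integrableOn_comp_div_Ioc (σ : Measure ℝ) [IsLocallyFiniteMeasure σ] {H : ℝ → ℝ}
    (hH : ContinuousOn H (Icc 0 1)) {r : ℝ} (hr : 0 < r) :
    IntegrableOn (fun t => H (t / r)) (Ioc 0 r) σ :=
  (hH.comp (continuousOn_id.div_const r) fun _ ht =>
    ⟨div_nonneg ht.1 hr.le, div_le_one_of_le₀ ht.2 hr.le⟩).integrableOn_Icc.mono_set
    Ioc_subset_Icc_self

theorem stmt18_general (σ : Measure ℝ) [IsLocallyFiniteMeasure σ]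
    (μ r₀ : ℝ) (hr₀ : 0 < r₀)
    (F G : ℝ → ℝ) (hF : ContinuousOn F (Set.Icc 0 1))
    (hG : ContinuousOn G (Set.Icc 0 1))
    (hyp : ∀ r : ℝ, r₀ ≤ r →
        (∫ t in Set.Ioc 0 r, F (t / r) ∂σ) ≤ ∫ t in Set.Ioc 0 r, G (t / r) ∂σ) :
    ∀ rb : ℝ, r₀ ≤ rb →
      0 ≤ ∫ t in Set.Ioc 0 rb,
          (∫ s in (t / rb)..(min 1 (t / r₀)), (G s - F s) * s ^ (μ - 1)) / t ^ μ
            ∂σ := by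
  intro rb hrb
  calc 0 ≤ ∫ r in Ioc r₀ rb, ∫ t in Ioc 0 rb, averagingKernel μ (G - F) (t, r) ∂σ :=
        setIntegral_nonneg measurableSet_Ioc fun r hr => by
          have hr_pos : 0 < r := hr₀.trans hr.1
          simp only [setIntegral_Ioc_averagingKernel_fst σ μ _ hr.2, Pi.sub_apply]
          rw [integral_sub (integrableOn_comp_div_Ioc σ hG hr_pos)
            (integrableOn_comp_div_Ioc σ hF hr_pos)]
          exact mul_nonneg (sub_nonneg.2 (hyp r hr.1.le)) (Real.rpow_nonneg hr_pos.le _)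
    _ = ∫ t in Ioc 0 rb, (∫ r in Ioc r₀ rb, averagingKernel μ (G - F) (t, r)) ∂σ :=
        (integral_integral_swap (f := fun t r => averagingKernel μ _ (t, r))
          (integrable_averagingKernel σ (hG.sub hF) hr₀)).symm
    _ = _ := setIntegral_congr_fun measurableSet_Ioc fun t ht =>
        setIntegral_Ioc_averagingKernel_snd (hG.sub hF) hr₀ hrb ht

/-- the averaging/Fubini step in the volume-growth proof. -/
theorem stmt18 (σ : Measure ℝ) [IsLocallyFiniteMeasure σ]
    (hσ : ∀ r : ℝ, σ (Set.Ioc 0 r) < ⊤)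
    (μ r₀ : ℝ) (hμ : 0 < μ) (hr₀ : 0 < r₀)
    (F G : ℝ → ℝ) (hF : ContinuousOn F (Set.Icc 0 1))
    (hG : ContinuousOn G (Set.Icc 0 1))
    (hFpos : ∀ s ∈ Set.Icc (0:ℝ) 1, 0 ≤ F s)
    (hGpos : ∀ s ∈ Set.Icc (0:ℝ) 1, 0 ≤ G s)
    (hyp : ∀ r : ℝ, r₀ ≤ r →
        (∫ t in Set.Ioc 0 r, F (t / r) ∂σ) ≤ ∫ t in Set.Ioc 0 r, G (t / r) ∂σ) :
    ∀ rb : ℝ, r₀ ≤ rb →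
      0 ≤ ∫ t in Set.Ioc 0 rb,
          (∫ s in (t / rb)..(min 1 (t / r₀)), (G s - F s) * s ^ (μ - 1)) / t ^ μ
            ∂σ :=
  stmt18_general σ μ r₀ hr₀ F G hF hG hyp
end
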